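/- Let (S_ε, I_ε, R_ε) solve the discrete SIR reaction–diffusion system on the grid D_ε with nonnegative solutions and bounded rates ᾱ = sup α, β̄ = sup β. Then the energy identity for S_ε holds: ‖S_ε(t)‖²_{L²} + 2μ_S ∫₀ᵗ ‖∇⁺_ε S_ε(r)‖²_{L²} dr = ‖S_ε(0)‖²_{L²} - 2∫₀ᵗ ⟨β(·)S_ε(r)I_ε(r)/A_ε(r), S_ε(r)⟩ dr, where A_ε = S_ε + I_ε + R_ε. Consequently (combining with the analogous identities for I_ε, R_ε and Gronwall's lemma) there is a constant C, independent of ε, such that sup_{0≤t≤T}(‖S_ε(t)‖²_{L²} + ‖I_ε(t)‖²_{L²} + ‖R_ε(t)‖²_{L²}) + 2∫₀ᵀ (μ_S‖∇⁺_ε S_ε(r)‖²_{L²} + μ_I‖∇⁺_ε I_ε(r)‖²_{L²} + μ_R‖∇⁺_ε R_ε(r)‖²_{L²}) dr ≤ C. -/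

import Mathlib

/-!
For a 1-periodic step function on the grid of mesh `ε = 1/n`, the integral over the torus is the
grid average `ε ∑ⱼ f(jε)`, so each energy is a finite sum of grid values and is differentiated in
time term by term. Summation by parts on the discrete torus turns the diffusion contribution to
`d/dt ‖U‖²` into `-2μ‖∇⁺_ε U‖²`; integrating in time gives the identity for `S_ε`. For
`Φ = ‖S‖² + ‖I‖² + ‖R‖²` the reaction terms are bounded pointwise using `0 ≤ βSI/A ≤ β̄ I`, so
`Φ' = -2D + B` with dissipation `D ≥ 0` and `B ≤ (2β̄ + ᾱ) Φ`. Gronwall gives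
`Φ ≤ K e^{(2β̄ + ᾱ)T}`, and integrating `Φ'` over `[0, T]` then bounds `∫₀ᵀ D`. No constant
depends on `ε`.
-/

noncomputable section
open Real Function Set intervalIntegral

def IsStep (n : ℕ) (f : ℝ → ℝ) : Prop :=
  ∀ j : ℤ, ∀ x ∈ Set.Ico ((j : ℝ) / n - 1 / (2 * n)) ((j : ℝ) / n + 1 / (2 * n)),
    f x = f ((j : ℝ) / n)

def inner01 (f g : ℝ → ℝ) : ℝ := ∫ x in (0 : ℝ)..1, f x * g x

def gradP (n : ℕ) (f : ℝ → ℝ) (x : ℝ) : ℝ := (n : ℝ) * (f (x + (n : ℝ)⁻¹) - f x)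

def lapE (n : ℕ) (f : ℝ → ℝ) (x : ℝ) : ℝ :=
  (n : ℝ) ^ 2 * (f (x + (n : ℝ)⁻¹) - 2 * f x + f (x - (n : ℝ)⁻¹))

open MeasureTheory

def IsPeriodicStep (n : ℕ) (f : ℝ → ℝ) : Prop := Periodic f 1 ∧ IsStep n f

def gridMean (n : ℕ) (f : ℝ → ℝ) : ℝ := (n : ℝ)⁻¹ * ∑ j ∈ Finset.range n, f (j / n)

namespace IsPeriodicStep

variable {n : ℕ} {f g : ℝ → ℝ}

theorem comp (φ : ℝ → ℝ) (hf : IsPeriodicStep n f) : IsPeriodicStep n fun x => φ (f x) :=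
  ⟨fun x => by simp only [hf.1 x], fun j x hx => by simp only [hf.2 j x hx]⟩

theorem comp₂ (φ : ℝ → ℝ → ℝ) (hf : IsPeriodicStep n f) (hg : IsPeriodicStep n g) :
    IsPeriodicStep n fun x => φ (f x) (g x) :=
  ⟨fun x => by simp only [hf.1 x, hg.1 x], fun j x hx => by simp only [hf.2 j x hx, hg.2 j x hx]⟩

theorem gradP (hn : 0 < n) (hf : IsPeriodicStep n f) : IsPeriodicStep n (gradP n f) := by
  refine ⟨fun x => by simp only [_root_.gradP, add_right_comm x 1, hf.1 _], fun j x hx => ?_⟩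
  have hnext : ((j + 1 : ℤ) : ℝ) / n = (j : ℝ) / n + (n : ℝ)⁻¹ := by push_cast; ring
  have hshift : ∀ y ∈ Ico ((j : ℝ) / n - 1 / (2 * n)) ((j : ℝ) / n + 1 / (2 * n)),
      f (y + (n : ℝ)⁻¹) = f (((j + 1 : ℤ) : ℝ) / n) := fun y ⟨hy₁, hy₂⟩ =>
    hf.2 _ _ ⟨by rw [hnext]; linarith, by rw [hnext]; linarith⟩
  have hcell : 0 < 1 / (2 * (n : ℝ)) := by positivity
  have hj : (j : ℝ) / n ∈ Ico ((j : ℝ) / n - 1 / (2 * n)) ((j : ℝ) / n + 1 / (2 * n)) :=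
    ⟨by linarith, by linarith⟩
  simp only [_root_.gradP, hshift x hx, hshift _ hj, hf.2 j x hx]

end IsPeriodicStep

theorem integral_eq_gridMean {n : ℕ} (hn : 0 < n) {f : ℝ → ℝ} (hf : IsPeriodicStep n f) :
    ∫ x in (0 : ℝ)..1, f x = gridMean n f := by
  have hn₀ : (0 : ℝ) < n := by positivity
  set a : ℕ → ℝ := fun k => k / n - 1 / (2 * n) with ha
  have hstep : ∀ k : ℕ, a (k + 1) - a k = (n : ℝ)⁻¹ := fun k => by simp only [ha]; push_cast; ring
  have hcell : ∀ k : ℕ, EqOn f (fun _ => f (k / n)) (uIoo (a k) (a (k + 1))) := by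
    intro k x hx
    rw [uIoo_of_le (by linarith [hstep k, inv_pos.2 hn₀])] at hx
    obtain ⟨hx₁, hx₂⟩ := hx
    have hright : a (k + 1) = k / n + 1 / (2 * n) := by simp only [ha]; push_cast; ring
    have h := hf.2 k x ⟨by push_cast; linarith, by push_cast; linarith⟩
    simpa using h
  have hpiece : ∀ k : ℕ, IntervalIntegrable f volume (a k) (a (k + 1)) ∧
      ∫ x in a k..a (k + 1), f x = (n : ℝ)⁻¹ * f (k / n) := fun k =>
    ⟨(intervalIntegrable_congr_uIoo (hcell k)).2 intervalIntegrable_const, by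
      rw [intervalIntegral.integral_congr_uIoo (hcell k), intervalIntegral.integral_const,
        smul_eq_mul, hstep]⟩
  have hperiod : ∫ x in (0 : ℝ)..1, f x = ∫ x in a 0..a n, f x := by
    have hend : a n = a 0 + 1 := by simp only [ha]; field_simp; ring
    rw [hend, ← hf.1.intervalIntegral_add_eq 0 (a 0), zero_add]
  rw [hperiod, ← intervalIntegral.sum_integral_adjacent_intervals fun k _ => (hpiece k).1,
    gridMean, Finset.mul_sum]
  exact Finset.sum_congr rfl fun k _ => (hpiece k).2

section GridMean

variable {n : ℕ} {f g : ℝ → ℝ}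

theorem gridMean_add : gridMean n (fun x => f x + g x) = gridMean n f + gridMean n g := by
  simp only [gridMean, Finset.sum_add_distrib, mul_add]

theorem gridMean_const_mul (c : ℝ) : gridMean n (fun x => c * f x) = c * gridMean n f := by
  simp only [gridMean, ← Finset.mul_sum]; ring

theorem gridMean_mono (h : ∀ x, f x ≤ g x) : gridMean n f ≤ gridMean n g :=
  mul_le_mul_of_nonneg_left (Finset.sum_le_sum fun _ _ => h _) (by positivity)

theorem gridMean_nonneg (h : ∀ x, 0 ≤ f x) : 0 ≤ gridMean n f :=
  mul_nonneg (by positivity) (Finset.sum_nonneg fun _ _ => h _)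

theorem Function.Periodic.gridMean_fwdDiff_eq_zero (hf : Periodic f 1) :
    gridMean n (fwdDiff (n : ℝ)⁻¹ f) = 0 := by
  have hsucc : ∀ j : ℕ, fwdDiff (n : ℝ)⁻¹ f (j / n) = f ((j + 1 : ℕ) / n) - f (j / n) :=
    fun j => by rw [fwdDiff]; push_cast; ring_nf
  have hend : f ((n : ℕ) / n) = f ((0 : ℕ) / n) := by
    rcases Nat.eq_zero_or_pos n with rfl | hn
    · rfl
    · rw [Nat.cast_zero, zero_div, div_self (by positivity), ← zero_add 1, hf]
  rw [gridMean, Finset.sum_congr rfl fun j _ => hsucc j,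
    Finset.sum_range_sub (fun j : ℕ => f (j / n)), hend, sub_self, mul_zero]

theorem Function.Periodic.gridMean_lapE_mul_self (hf : Periodic f 1) :
    gridMean n (fun x => lapE n f x * f x) = -gridMean n (fun x => gradP n f x * gradP n f x) := by
  set Φ : ℝ → ℝ := fun x => f x * f x - f (x - (n : ℝ)⁻¹) * f x
  have hΦ : Periodic Φ 1 := (hf.mul hf).sub ((hf.sub_const _).mul hf)
  have hsum : (fun x => lapE n f x * f x + gradP n f x * gradP n f x) =
      fun x => (n : ℝ) ^ 2 * fwdDiff (n : ℝ)⁻¹ Φ x := by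
    ext x
    simp only [Φ, fwdDiff, lapE, gradP, add_sub_cancel_right]
    ring
  have h := congrArg (gridMean n) hsum
  rw [gridMean_add, gridMean_const_mul, hΦ.gridMean_fwdDiff_eq_zero, mul_zero] at h
  linarith

theorem hasDerivAt_gridMean {F : ℝ → ℝ → ℝ} {F' : ℝ → ℝ} {t : ℝ}
    (hF : ∀ x, HasDerivAt (fun s => F s x) (F' x) t) :
    HasDerivAt (fun s => gridMean n (F s)) (gridMean n F') t :=
  (HasDerivAt.fun_sum fun _ _ => hF _).const_mul _

theorem continuousOn_gridMean {F : ℝ → ℝ → ℝ} {s : Set ℝ}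
    (hF : ∀ x, ContinuousOn (fun t => F t x) s) :
    ContinuousOn (fun t => gridMean n (F t)) s :=
  continuousOn_const.mul (continuousOn_finsetSum _ fun _ _ => hF _)

end GridMean

section Inner01

variable {n : ℕ} {f g : ℝ → ℝ}

theorem inner01_eq_gridMean (hn : 0 < n) (hf : IsPeriodicStep n f) (hg : IsPeriodicStep n g) :
    inner01 f g = gridMean n (fun x => f x * g x) :=
  integral_eq_gridMean hn (hf.comp₂ (· * ·) hg)

theorem inner01_neg_left : inner01 (fun x => -f x) g = -inner01 f g := by
  simp only [inner01, neg_mul, intervalIntegral.integral_neg]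

theorem inner01_self_nonneg (hn : 0 < n) (hf : IsPeriodicStep n f) : 0 ≤ inner01 f f := by
  rw [inner01_eq_gridMean hn hf hf]
  exact gridMean_nonneg fun x => mul_self_nonneg (f x)

theorem continuousOn_inner01 (hn : 0 < n) {F G : ℝ → ℝ → ℝ} {s : Set ℝ}
    (hF : ∀ t ∈ s, IsPeriodicStep n (F t)) (hG : ∀ t ∈ s, IsPeriodicStep n (G t))
    (hFc : ∀ x, ContinuousOn (fun t => F t x) s) (hGc : ∀ x, ContinuousOn (fun t => G t x) s) :
    ContinuousOn (fun t => inner01 (F t) (G t)) s :=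
  (continuousOn_gridMean fun x => (hFc x).mul (hGc x)).congr fun t ht =>
    inner01_eq_gridMean hn (hF t ht) (hG t ht)

theorem continuousOn_inner01_gradP (hn : 0 < n) {U : ℝ → ℝ → ℝ} {s : Set ℝ}
    (hU : ∀ t ∈ s, IsPeriodicStep n (U t)) (hUc : ∀ x, ContinuousOn (fun t => U t x) s) :
    ContinuousOn (fun t => inner01 (gradP n (U t)) (gradP n (U t))) s :=
  have hgrad : ∀ x, ContinuousOn (fun t => gradP n (U t) x) s := fun x =>
    continuousOn_const.mul ((hUc _).sub (hUc x))
  continuousOn_inner01 hn (fun t ht => (hU t ht).gradP hn) (fun t ht => (hU t ht).gradP hn)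
    hgrad hgrad

theorem hasDerivAt_inner01_self (hn : 0 < n) {U : ℝ → ℝ → ℝ} {F : ℝ → ℝ} {μ t : ℝ}
    (hU : ∀ s, IsPeriodicStep n (U s)) (hF : IsPeriodicStep n F)
    (hd : ∀ x, HasDerivAt (fun s => U s x) (μ * lapE n (U t) x + F x) t) :
    HasDerivAt (fun s => inner01 (U s) (U s))
      (-(2 * μ * inner01 (gradP n (U t)) (gradP n (U t))) + 2 * inner01 F (U t)) t := by
  have hgrid := hasDerivAt_gridMean (n := n) fun x => (hd x).mul (hd x)
  rw [inner01_eq_gridMean hn ((hU t).gradP hn) ((hU t).gradP hn), inner01_eq_gridMean hn hF (hU t)]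
  convert hgrid using 1
  · exact funext fun s => inner01_eq_gridMean hn (hU s) (hU s)
  · have hsplit : (fun x => (μ * lapE n (U t) x + F x) * U t x + U t x * (μ * lapE n (U t) x + F x))
        = fun x => 2 * μ * (lapE n (U t) x * U t x) + 2 * (F x * U t x) := by
      ext x; ring
    rw [hsplit, gridMean_add, gridMean_const_mul, gridMean_const_mul,
      (hU t).1.gridMean_lapE_mul_self]
    ring

end Inner01

theorem le_mul_exp_of_hasDerivAt_le {Φ Φ' : ℝ → ℝ} {c T : ℝ}
    (hΦ : ∀ t ∈ Icc 0 T, HasDerivAt Φ (Φ' t) t) (hle : ∀ t ∈ Icc 0 T, Φ' t ≤ c * Φ t) :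
    ∀ t ∈ Icc 0 T, Φ t ≤ Φ 0 * exp (c * t) := by
  intro t ht
  have h := le_gronwallBound_of_liminf_deriv_right_le (ε := 0) (HasDerivAt.continuousOn hΦ)
    (fun r hr _ hlt => (hΦ r (Ico_subset_Icc_self hr)).hasDerivWithinAt.liminf_right_slope_le hlt)
    le_rfl (fun r hr => by simpa using hle r (Ico_subset_Icc_self hr)) t ht
  rwa [gronwallBound_ε0, sub_zero] at h

theorem energy_identity_of_hasDerivAt {F G H : ℝ → ℝ} {μ T : ℝ}
    (hF : ∀ t ∈ Icc 0 T, HasDerivAt F (-(2 * μ * G t) - 2 * H t) t)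
    (hG : ContinuousOn G (Icc 0 T)) (hH : ContinuousOn H (Icc 0 T)) :
    ∀ t ∈ Icc 0 T, F t + 2 * μ * ∫ r in 0..t, G r = F 0 - 2 * ∫ r in 0..t, H r := by
  intro t ht
  have hsub : uIcc 0 t ⊆ Icc 0 T := by
    rw [uIcc_of_le ht.1]; exact Icc_subset_Icc_right ht.2
  have hGi : IntervalIntegrable (fun r => -(2 * μ * G r)) volume 0 t :=
    ((hG.mono hsub).intervalIntegrable.const_mul _).neg
  have hHi : IntervalIntegrable (fun r => 2 * H r) volume 0 t :=
    (hH.mono hsub).intervalIntegrable.const_mul _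
  have hftc := integral_eq_sub_of_hasDerivAt (fun r hr => hF r (hsub hr)) (hGi.sub hHi)
  rw [intervalIntegral.integral_sub hGi hHi, intervalIntegral.integral_neg,
    intervalIntegral.integral_const_mul, intervalIntegral.integral_const_mul] at hftc
  linarith

theorem add_two_mul_integral_le_of_hasDerivAt {Φ D B : ℝ → ℝ} {c T K : ℝ} (hc : 0 ≤ c)
    (hΦ : ∀ t ∈ Icc 0 T, HasDerivAt Φ (-(2 * D t) + B t) t)
    (hD : ContinuousOn D (Icc 0 T)) (hB : ContinuousOn B (Icc 0 T))
    (hD₀ : ∀ t ∈ Icc 0 T, 0 ≤ D t) (hΦ₀ : ∀ t, 0 ≤ Φ t)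
    (hBΦ : ∀ t ∈ Icc 0 T, B t ≤ c * Φ t) (hK : Φ 0 ≤ K) :
    ∀ t ∈ Icc 0 T, Φ t + 2 * ∫ r in 0..T, D r ≤ K * exp (c * T) * (1 + c * T) + K := by
  intro t ht
  have hT : 0 ≤ T := ht.1.trans ht.2
  have hΦle : ∀ r ∈ Icc 0 T, Φ r ≤ K * exp (c * T) := fun r hr =>
    calc Φ r ≤ Φ 0 * exp (c * r) :=
          le_mul_exp_of_hasDerivAt_le hΦ (fun r hr => by linarith [hD₀ r hr, hBΦ r hr]) r hr
      _ ≤ Φ 0 * exp (c * T) := by gcongr; exacts [hΦ₀ 0, hr.2]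
      _ ≤ K * exp (c * T) := by gcongr
  have hsub : uIcc 0 T ⊆ Icc 0 T := (uIcc_of_le hT).subset
  have hDi : IntervalIntegrable (fun r => -(2 * D r)) volume 0 T :=
    ((hD.mono hsub).intervalIntegrable.const_mul _).neg
  have hBi : IntervalIntegrable B volume 0 T := (hB.mono hsub).intervalIntegrable
  have hftc := integral_eq_sub_of_hasDerivAt (fun r hr => hΦ r (hsub hr)) (hDi.add hBi)
  rw [intervalIntegral.integral_add hDi hBi, intervalIntegral.integral_neg,
    intervalIntegral.integral_const_mul] at hftc
  have hBint := intervalIntegral.integral_mono_on hT hBi intervalIntegrable_const fun r hr =>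
    (hBΦ r hr).trans (mul_le_mul_of_nonneg_left (hΦle r hr) hc)
  rw [intervalIntegral.integral_const, smul_eq_mul, sub_zero] at hBint
  linarith [hΦle t ht, hΦ₀ T]

theorem sirReaction_integrand_le {s i r a b abar bbar : ℝ} (hs : 0 ≤ s) (hi : 0 ≤ i) (hr : 0 ≤ r)
    (hA : 0 < s + i + r) (ha : 0 ≤ a) (haabar : a ≤ abar) (hb : 0 ≤ b) (hbbbar : b ≤ bbar) :
    2 * (-(b * s * i / (s + i + r)) * s + (b * s * i / (s + i + r) - a * i) * i + a * i * r)
      ≤ (2 * bbar + abar) * (s * s + i * i + r * r) := by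
  set ρ := b * s * i / (s + i + r)
  have hρ₀ : 0 ≤ ρ := by positivity
  have hρ : ρ ≤ bbar * i := by
    rw [div_le_iff₀ hA]
    nlinarith [mul_nonneg (mul_nonneg hb hi) (add_nonneg hi hr),
      mul_nonneg (mul_nonneg (sub_nonneg.2 hbbbar) hi) hA.le]
  -- `-ρs ≤ 0`, `ρi ≤ β̄i²` and `a(ir - i²) ≤ ᾱr²/2`
  nlinarith [mul_nonneg hρ₀ hs, mul_le_mul_of_nonneg_right hρ hi, mul_nonneg ha (sq_nonneg (i - r)),
    mul_nonneg (sub_nonneg.2 haabar) (mul_self_nonneg r), mul_self_nonneg s, mul_self_nonneg i,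
    mul_nonneg ha (mul_self_nonneg r)]

def infection (β : ℝ → ℝ) (s i r : ℝ → ℝ) (x : ℝ) : ℝ := β x * s x * i x / (s x + i x + r x)

structure IsSIRSolution (n : ℕ) (μS μI μR T : ℝ) (S I R : ℝ → ℝ → ℝ) (α β : ℝ → ℝ) : Prop where
  periodicStep_S : ∀ t, IsPeriodicStep n (S t)
  periodicStep_I : ∀ t, IsPeriodicStep n (I t)
  periodicStep_R : ∀ t, IsPeriodicStep n (R t)
  periodicStep_α : IsPeriodicStep n α
  periodicStep_β : IsPeriodicStep n β
  total_pos : ∀ t x, 0 < S t x + I t x + R t x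
  hasDerivAt_S : ∀ t ∈ Icc 0 T, ∀ x, HasDerivAt (fun s => S s x)
    (μS * lapE n (S t) x - infection β (S t) (I t) (R t) x) t
  hasDerivAt_I : ∀ t ∈ Icc 0 T, ∀ x, HasDerivAt (fun s => I s x)
    (μI * lapE n (I t) x + infection β (S t) (I t) (R t) x - α x * I t x) t
  hasDerivAt_R : ∀ t ∈ Icc 0 T, ∀ x, HasDerivAt (fun s => R s x)
    (μR * lapE n (R t) x + α x * I t x) t

def sirEnergy (S I R : ℝ → ℝ → ℝ) (t : ℝ) : ℝ :=
  inner01 (S t) (S t) + inner01 (I t) (I t) + inner01 (R t) (R t)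

def sirDissipation (n : ℕ) (μS μI μR : ℝ) (S I R : ℝ → ℝ → ℝ) (t : ℝ) : ℝ :=
  μS * inner01 (gradP n (S t)) (gradP n (S t)) + μI * inner01 (gradP n (I t)) (gradP n (I t))
    + μR * inner01 (gradP n (R t)) (gradP n (R t))

def sirReaction (α β : ℝ → ℝ) (S I R : ℝ → ℝ → ℝ) (t : ℝ) : ℝ :=
  2 * (-inner01 (infection β (S t) (I t) (R t)) (S t)
    + inner01 (fun x => infection β (S t) (I t) (R t) x - α x * I t x) (I t)
    + inner01 (fun x => α x * I t x) (R t))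

namespace IsSIRSolution

variable {n : ℕ} {μS μI μR T : ℝ} {S I R : ℝ → ℝ → ℝ} {α β : ℝ → ℝ}

theorem periodicStep_infection (h : IsSIRSolution n μS μI μR T S I R α β) (t : ℝ) :
    IsPeriodicStep n (infection β (S t) (I t) (R t)) :=
  ((h.periodicStep_β.comp₂ (· * ·) (h.periodicStep_S t)).comp₂ (· * ·) (h.periodicStep_I t)).comp₂
    (· / ·) (((h.periodicStep_S t).comp₂ (· + ·) (h.periodicStep_I t)).comp₂ (· + ·)
      (h.periodicStep_R t))

theorem periodicStep_recovery (h : IsSIRSolution n μS μI μR T S I R α β) (t : ℝ) :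
    IsPeriodicStep n (fun x => α x * I t x) :=
  h.periodicStep_α.comp₂ (· * ·) (h.periodicStep_I t)

theorem continuousOn_S (h : IsSIRSolution n μS μI μR T S I R α β) (x : ℝ) :
    ContinuousOn (fun t => S t x) (Icc 0 T) :=
  HasDerivAt.continuousOn fun t ht => h.hasDerivAt_S t ht x

theorem continuousOn_I (h : IsSIRSolution n μS μI μR T S I R α β) (x : ℝ) :
    ContinuousOn (fun t => I t x) (Icc 0 T) :=
  HasDerivAt.continuousOn fun t ht => h.hasDerivAt_I t ht x

theorem continuousOn_R (h : IsSIRSolution n μS μI μR T S I R α β) (x : ℝ) :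
    ContinuousOn (fun t => R t x) (Icc 0 T) :=
  HasDerivAt.continuousOn fun t ht => h.hasDerivAt_R t ht x

theorem continuousOn_infection (h : IsSIRSolution n μS μI μR T S I R α β) (x : ℝ) :
    ContinuousOn (fun t => infection β (S t) (I t) (R t) x) (Icc 0 T) :=
  ((continuousOn_const.mul (h.continuousOn_S x)).mul (h.continuousOn_I x)).div
    (((h.continuousOn_S x).add (h.continuousOn_I x)).add (h.continuousOn_R x))
    fun t _ => (h.total_pos t x).ne'

theorem hasDerivAt_inner01_S (hn : 0 < n) (h : IsSIRSolution n μS μI μR T S I R α β) :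
    ∀ t ∈ Icc 0 T, HasDerivAt (fun s => inner01 (S s) (S s))
      (-(2 * μS * inner01 (gradP n (S t)) (gradP n (S t)))
        - 2 * inner01 (infection β (S t) (I t) (R t)) (S t)) t := by
  intro t ht
  have hd := hasDerivAt_inner01_self hn h.periodicStep_S ((h.periodicStep_infection t).comp Neg.neg)
    fun x => (h.hasDerivAt_S t ht x).congr_deriv (sub_eq_add_neg _ _)
  rw [inner01_neg_left] at hd
  exact hd.congr_deriv (by ring)

theorem hasDerivAt_sirEnergy (hn : 0 < n) (h : IsSIRSolution n μS μI μR T S I R α β) :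
    ∀ t ∈ Icc 0 T, HasDerivAt (sirEnergy S I R)
      (-(2 * sirDissipation n μS μI μR S I R t) + sirReaction α β S I R t) t := by
  intro t ht
  have hS := h.hasDerivAt_inner01_S hn t ht
  have hI := hasDerivAt_inner01_self hn h.periodicStep_I
    ((h.periodicStep_infection t).comp₂ (· - ·) (h.periodicStep_recovery t))
    fun x => (h.hasDerivAt_I t ht x).congr_deriv (add_sub_assoc _ _ _)
  have hR := hasDerivAt_inner01_self hn h.periodicStep_R (h.periodicStep_recovery t)
    (h.hasDerivAt_R t ht)
  exact ((hS.add hI).add hR).congr_deriv (by simp only [sirDissipation, sirReaction]; ring)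

theorem continuousOn_sirDissipation (hn : 0 < n) (h : IsSIRSolution n μS μI μR T S I R α β) :
    ContinuousOn (sirDissipation n μS μI μR S I R) (Icc 0 T) :=
  ((continuousOn_const.mul (continuousOn_inner01_gradP hn (fun t _ => h.periodicStep_S t)
      h.continuousOn_S)).add
    (continuousOn_const.mul (continuousOn_inner01_gradP hn (fun t _ => h.periodicStep_I t)
      h.continuousOn_I))).add
    (continuousOn_const.mul (continuousOn_inner01_gradP hn (fun t _ => h.periodicStep_R t)
      h.continuousOn_R))

theorem continuousOn_inner01_infection_S (hn : 0 < n)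
    (h : IsSIRSolution n μS μI μR T S I R α β) :
    ContinuousOn (fun t => inner01 (infection β (S t) (I t) (R t)) (S t)) (Icc 0 T) :=
  continuousOn_inner01 hn (fun t _ => h.periodicStep_infection t) (fun t _ => h.periodicStep_S t)
    h.continuousOn_infection h.continuousOn_S

theorem continuousOn_sirReaction (hn : 0 < n) (h : IsSIRSolution n μS μI μR T S I R α β) :
    ContinuousOn (sirReaction α β S I R) (Icc 0 T) := by
  have hαI : ∀ x, ContinuousOn (fun t => α x * I t x) (Icc 0 T) := fun x =>
    continuousOn_const.mul (h.continuousOn_I x)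
  refine continuousOn_const.mul (((h.continuousOn_inner01_infection_S hn).neg.add
    (continuousOn_inner01 hn
    (fun t _ => (h.periodicStep_infection t).comp₂ (· - ·) (h.periodicStep_recovery t))
    (fun t _ => h.periodicStep_I t)
    (fun x => (h.continuousOn_infection x).sub (hαI x)) h.continuousOn_I)).add
    (continuousOn_inner01 hn (fun t _ => h.periodicStep_recovery t)
    (fun t _ => h.periodicStep_R t) hαI h.continuousOn_R))

theorem sirEnergy_nonneg (hn : 0 < n) (h : IsSIRSolution n μS μI μR T S I R α β) (t : ℝ) :
    0 ≤ sirEnergy S I R t :=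
  add_nonneg (add_nonneg (inner01_self_nonneg hn (h.periodicStep_S t))
    (inner01_self_nonneg hn (h.periodicStep_I t))) (inner01_self_nonneg hn (h.periodicStep_R t))

theorem sirDissipation_nonneg (hn : 0 < n) (h : IsSIRSolution n μS μI μR T S I R α β)
    (hμS : 0 ≤ μS) (hμI : 0 ≤ μI) (hμR : 0 ≤ μR) (t : ℝ) :
    0 ≤ sirDissipation n μS μI μR S I R t :=
  add_nonneg (add_nonneg
    (mul_nonneg hμS (inner01_self_nonneg hn ((h.periodicStep_S t).gradP hn)))
    (mul_nonneg hμI (inner01_self_nonneg hn ((h.periodicStep_I t).gradP hn))))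
    (mul_nonneg hμR (inner01_self_nonneg hn ((h.periodicStep_R t).gradP hn)))

theorem sirReaction_le (hn : 0 < n) (h : IsSIRSolution n μS μI μR T S I R α β) {αbar βbar : ℝ}
    (hα : ∀ x, 0 ≤ α x ∧ α x ≤ αbar) (hβ : ∀ x, 0 ≤ β x ∧ β x ≤ βbar)
    (hS₀ : ∀ t x, 0 ≤ S t x) (hI₀ : ∀ t x, 0 ≤ I t x) (hR₀ : ∀ t x, 0 ≤ R t x) (t : ℝ) :
    sirReaction α β S I R t ≤ (2 * βbar + αbar) * sirEnergy S I R t := by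
  have hρ := h.periodicStep_infection t
  rw [sirReaction, sirEnergy, ← inner01_neg_left,
    inner01_eq_gridMean hn (hρ.comp Neg.neg) (h.periodicStep_S t),
    inner01_eq_gridMean hn (hρ.comp₂ (· - ·) (h.periodicStep_recovery t)) (h.periodicStep_I t),
    inner01_eq_gridMean hn (h.periodicStep_recovery t) (h.periodicStep_R t),
    inner01_eq_gridMean hn (h.periodicStep_S t) (h.periodicStep_S t),
    inner01_eq_gridMean hn (h.periodicStep_I t) (h.periodicStep_I t),
    inner01_eq_gridMean hn (h.periodicStep_R t) (h.periodicStep_R t),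
    ← gridMean_add, ← gridMean_add, ← gridMean_add, ← gridMean_add,
    ← gridMean_const_mul, ← gridMean_const_mul]
  exact gridMean_mono fun x => sirReaction_integrand_le (hS₀ t x) (hI₀ t x) (hR₀ t x)
    (h.total_pos t x) (hα x).1 (hα x).2 (hβ x).1 (hβ x).2

end IsSIRSolution

theorem stmt10_general (μS μI μR αbar βbar T K : ℝ)
    (hμS : 0 < μS) (hμI : 0 < μI) (hμR : 0 < μR)
    (hαbar : 0 ≤ αbar) (hβbar : 0 ≤ βbar) :
    ∃ C : ℝ, ∀ n : ℕ, 0 < n →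
      ∀ (S I R : ℝ → ℝ → ℝ) (α β : ℝ → ℝ),
      (∀ t, Periodic (S t) 1 ∧ IsStep n (S t)) →
      (∀ t, Periodic (I t) 1 ∧ IsStep n (I t)) →
      (∀ t, Periodic (R t) 1 ∧ IsStep n (R t)) →
      Periodic α 1 → IsStep n α → Periodic β 1 → IsStep n β →
      (∀ x, 0 ≤ α x ∧ α x ≤ αbar) → (∀ x, 0 ≤ β x ∧ β x ≤ βbar) →
      (∀ t x, 0 ≤ S t x) → (∀ t x, 0 ≤ I t x) → (∀ t x, 0 ≤ R t x) →
      (∀ t x, 0 < S t x + I t x + R t x) →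
      inner01 (S 0) (S 0) + inner01 (I 0) (I 0) + inner01 (R 0) (R 0) ≤ K →
      (∀ t ∈ Icc (0 : ℝ) T, ∀ x, HasDerivAt (fun s => S s x)
          (μS * lapE n (S t) x
            - β x * S t x * I t x / (S t x + I t x + R t x)) t) →
      (∀ t ∈ Icc (0 : ℝ) T, ∀ x, HasDerivAt (fun s => I s x)
          (μI * lapE n (I t) x
            + β x * S t x * I t x / (S t x + I t x + R t x) - α x * I t x) t) →
      (∀ t ∈ Icc (0 : ℝ) T, ∀ x, HasDerivAt (fun s => R s x)
          (μR * lapE n (R t) x + α x * I t x) t) →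
      -- energy identity for `S_ε`:
      (∀ t ∈ Icc (0 : ℝ) T,
        inner01 (S t) (S t)
            + 2 * μS * ∫ r in (0 : ℝ)..t, inner01 (gradP n (S r)) (gradP n (S r))
          = inner01 (S 0) (S 0)
            - 2 * ∫ r in (0 : ℝ)..t,
                inner01 (fun x => β x * S r x * I r x / (S r x + I r x + R r x)) (S r)) ∧
      -- uniform bound:
      (∀ t ∈ Icc (0 : ℝ) T,
        inner01 (S t) (S t) + inner01 (I t) (I t) + inner01 (R t) (R t)
          + 2 * (∫ r in (0 : ℝ)..T,
              (μS * inner01 (gradP n (S r)) (gradP n (S r))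
                + μI * inner01 (gradP n (I r)) (gradP n (I r))
                + μR * inner01 (gradP n (R r)) (gradP n (R r)))) ≤ C) := by
  set c := 2 * βbar + αbar
  refine ⟨K * exp (c * T) * (1 + c * T) + K, ?_⟩
  intro n hn S I R α β hS hI hR hαp hαs hβp hβs hα hβ hS₀ hI₀ hR₀ hA hK dS dI dR
  have h : IsSIRSolution n μS μI μR T S I R α β :=
    ⟨hS, hI, hR, ⟨hαp, hαs⟩, ⟨hβp, hβs⟩, hA, dS, dI, dR⟩
  refine ⟨energy_identity_of_hasDerivAt (h.hasDerivAt_inner01_S hn)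
    (continuousOn_inner01_gradP hn (fun t _ => h.periodicStep_S t) h.continuousOn_S)
    (h.continuousOn_inner01_infection_S hn), ?_⟩
  exact add_two_mul_integral_le_of_hasDerivAt (by positivity) (h.hasDerivAt_sirEnergy hn)
    (h.continuousOn_sirDissipation hn) (h.continuousOn_sirReaction hn)
    (fun t _ => h.sirDissipation_nonneg hn hμS.le hμI.le hμR.le t) (h.sirEnergy_nonneg hn)
    (fun t _ => h.sirReaction_le hn hα hβ hS₀ hI₀ hR₀ t) hK

/-- Energy identity and uniform (in `ε`) a priori bound for the discrete SIR
reaction–diffusion system. -/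
theorem stmt10 (μS μI μR αbar βbar T K : ℝ)
    (hμS : 0 < μS) (hμI : 0 < μI) (hμR : 0 < μR)
    (hαbar : 0 ≤ αbar) (hβbar : 0 ≤ βbar) (hT : 0 < T) (hK : 0 ≤ K) :
    ∃ C : ℝ, ∀ n : ℕ, 0 < n →
      ∀ (S I R : ℝ → ℝ → ℝ) (α β : ℝ → ℝ),
      (∀ t, Periodic (S t) 1 ∧ IsStep n (S t)) →
      (∀ t, Periodic (I t) 1 ∧ IsStep n (I t)) →
      (∀ t, Periodic (R t) 1 ∧ IsStep n (R t)) →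
      Periodic α 1 → IsStep n α → Periodic β 1 → IsStep n β →
      (∀ x, 0 ≤ α x ∧ α x ≤ αbar) → (∀ x, 0 ≤ β x ∧ β x ≤ βbar) →
      (∀ t x, 0 ≤ S t x) → (∀ t x, 0 ≤ I t x) → (∀ t x, 0 ≤ R t x) →
      (∀ t x, 0 < S t x + I t x + R t x) →
      inner01 (S 0) (S 0) + inner01 (I 0) (I 0) + inner01 (R 0) (R 0) ≤ K →
      (∀ t ∈ Icc (0 : ℝ) T, ∀ x, HasDerivAt (fun s => S s x)
          (μS * lapE n (S t) x
            - β x * S t x * I t x / (S t x + I t x + R t x)) t) →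
      (∀ t ∈ Icc (0 : ℝ) T, ∀ x, HasDerivAt (fun s => I s x)
          (μI * lapE n (I t) x
            + β x * S t x * I t x / (S t x + I t x + R t x) - α x * I t x) t) →
      (∀ t ∈ Icc (0 : ℝ) T, ∀ x, HasDerivAt (fun s => R s x)
          (μR * lapE n (R t) x + α x * I t x) t) →
      -- energy identity for `S_ε`:
      (∀ t ∈ Icc (0 : ℝ) T,
        inner01 (S t) (S t)
            + 2 * μS * ∫ r in (0 : ℝ)..t, inner01 (gradP n (S r)) (gradP n (S r))
          = inner01 (S 0) (S 0)
            - 2 * ∫ r in (0 : ℝ)..t,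
                inner01 (fun x => β x * S r x * I r x / (S r x + I r x + R r x)) (S r)) ∧
      -- uniform bound:
      (∀ t ∈ Icc (0 : ℝ) T,
        inner01 (S t) (S t) + inner01 (I t) (I t) + inner01 (R t) (R t)
          + 2 * (∫ r in (0 : ℝ)..T,
              (μS * inner01 (gradP n (S r)) (gradP n (S r))
                + μI * inner01 (gradP n (I r)) (gradP n (I r))
                + μR * inner01 (gradP n (R r)) (gradP n (R r)))) ≤ C) :=
  stmt10_general μS μI μR αbar βbar T K hμS hμI hμR hαbar hβbar
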